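/- For every α ∈ (0,1), every integer k ≥ 0, and every x ∈ [0,α], one has 0 ≤ x·g_k′(x) ≤ g_k(x) ≤ α_k, where g_k′ denotes the derivative of g_k. -/

import Mathlib

/-- `mu p t = ((t - t^p)/((p-1)(1-t)))^(1/p)`, the real positive `p`th root. -/
noncomputable def mu (p : ℕ) (t : ℝ) : ℝ :=
  ((t - t ^ p) / (((p : ℝ) - 1) * (1 - t))) ^ ((1 : ℝ) / p)

/-- The sequence `α_0 = α`, `α_{k+1} = p α_k / ((p-1) μ(α_k) + μ(α_k)^(1-p) α_k^p)`. -/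
noncomputable def alphaSeq (p : ℕ) (α : ℝ) : ℕ → ℝ
  | 0 => α
  | k + 1 =>
      (p : ℝ) * alphaSeq p α k /
        (((p : ℝ) - 1) * mu p (alphaSeq p α k) +
          alphaSeq p α k ^ p / mu p (alphaSeq p α k) ^ (p - 1))

/-- `f_0(x) = 1`, `f_{k+1}(x) = (1/p)((p-1) μ(α_k) f_k(x) + x/(μ(α_k)^(p-1) f_k(x)^(p-1)))`. -/
noncomputable def fSeq (p : ℕ) (α : ℝ) : ℕ → ℝ → ℝ
  | 0, _ => 1
  | k + 1, x =>
      (1 / (p : ℝ)) *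
        (((p : ℝ) - 1) * mu p (alphaSeq p α k) * fSeq p α k x +
          x / (mu p (alphaSeq p α k) ^ (p - 1) * fSeq p α k x ^ (p - 1)))

/-- The scaled iterate `f̃_k(x) = (2 α_k/(1+α_k)) f_k(x)`. -/
noncomputable def ftilde (p : ℕ) (α : ℝ) (k : ℕ) (x : ℝ) : ℝ :=
  (2 * alphaSeq p α k / (1 + alphaSeq p α k)) * fSeq p α k x

/-- `g_k(x) = x / f_k(x^p)`. -/
noncomputable def gSeq (p : ℕ) (α : ℝ) (k : ℕ) (x : ℝ) : ℝ := x / fSeq p α k (x ^ p)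

lemma mu_bounds (r : ℕ) (t : ℝ) (h0 : 0 < t) (h1 : t < 1) :
    0 < mu (r+2) t ∧ t < mu (r+2) t ∧ (mu (r+2) t) ^ (r+2) ≤ t := by
  have h1t : (0:ℝ) < 1 - t := by linarith
  set S : ℝ := ∑ i ∈ Finset.range (r+1), t ^ i with hS
  have hgs : (1 - t) * S = 1 - t ^ (r+1) := by
    have h := geom_sum_mul t (r+1)
    rw [← hS] at h
    linear_combination -h
  have hSpos : 0 < S := by
    rw [hS]
    exact Finset.sum_pos (fun i _ => pow_pos h0 i) (by simp)
  have hSle : S ≤ (r : ℝ) + 1 := by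
    calc S ≤ (Finset.range (r+1)).card • (1:ℝ) := by
          apply Finset.sum_le_card_nsmul
          intro i _
          exact pow_le_one₀ h0.le h1.le
      _ = (r:ℝ) + 1 := by simp
  have hSge : ((r:ℝ) + 1) * t ^ r ≤ S := by
    have h := Finset.card_nsmul_le_sum (Finset.range (r+1)) (fun i => t ^ i) (t ^ r)
      (fun i hi => pow_le_pow_of_le_one h0.le h1.le (by
        simpa using Nat.lt_succ_iff.mp (Finset.mem_range.mp hi)))
    simpa [nsmul_eq_mul] using h
  have hnum : t - t ^ (r+2) = t * ((1 - t) * S) := by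
    rw [hgs]; ring
  have hden : (0:ℝ) < ((r:ℝ) + 1) * (1 - t) := by positivity
  set E : ℝ := (t - t ^ (r+2)) / (((r:ℝ) + 1) * (1 - t)) with hE
  have hEpos : 0 < E := by
    apply div_pos _ hden
    rw [hnum]
    exact mul_pos h0 (mul_pos h1t hSpos)
  have hmu_eq : mu (r+2) t = E ^ ((1:ℝ)/((r:ℝ)+2)) := by
    rw [mu, hE]
    push_cast
    ring_nf
  have hmupow : mu (r+2) t ^ (r+2) = E := by
    rw [hmu_eq, ← Real.rpow_natCast (E ^ ((1:ℝ)/((r:ℝ)+2))) (r+2),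
      ← Real.rpow_mul hEpos.le]
    push_cast
    rw [one_div, inv_mul_cancel₀ (by positivity : ((r:ℝ)+2) ≠ 0), Real.rpow_one]
  have hEle : E ≤ t := by
    rw [hE, div_le_iff₀ hden, hnum]
    calc t * ((1 - t) * S) = (t * (1-t)) * S := by ring
      _ ≤ (t * (1-t)) * ((r:ℝ)+1) := by
          apply mul_le_mul_of_nonneg_left hSle (by positivity)
      _ = t * (((r:ℝ)+1) * (1 - t)) := by ring
  have hEge : t ^ (r+1) ≤ E := by
    rw [hE, le_div_iff₀ hden, hnum]
    calc t ^ (r+1) * (((r:ℝ)+1) * (1-t)) = (t * (1-t)) * (((r:ℝ)+1) * t ^ r) := by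
          rw [pow_succ]; ring
      _ ≤ (t * (1-t)) * S := mul_le_mul_of_nonneg_left hSge (by positivity)
      _ = t * ((1 - t) * S) := by ring
  refine ⟨?_, ?_, ?_⟩
  · rw [hmu_eq]; positivity
  · apply lt_of_pow_lt_pow_left₀ (r+2) (by rw [hmu_eq]; positivity)
    rw [hmupow]
    calc t ^ (r+2) = t * t ^ (r+1) := by ring
      _ < 1 * t ^ (r+1) := mul_lt_mul_of_pos_right h1 (pow_pos h0 _)
      _ = t ^ (r+1) := one_mul _
      _ ≤ E := hEge
  · rw [hmupow]; exact hEle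

lemma amgm (r : ℕ) (a b : ℝ) (hb : 0 ≤ b) (hba : b < a) :
    ((r:ℝ)+2) * a^(r+1) * b < ((r:ℝ)+1) * a^(r+2) + b^(r+2) := by
  have ha : 0 < a := hb.trans_lt hba
  have hgs := geom_sum₂_mul b a (r+2)
  set S : ℝ := ∑ i ∈ Finset.range (r+2), b ^ i * a ^ (r+2-1-i) with hS
  have hSlt : S < ((r:ℝ)+2) * a^(r+1) := by
    have h := Finset.sum_lt_sum (f := fun i => b ^ i * a ^ (r+2-1-i))
      (g := fun _ => a ^ (r+1)) (s := Finset.range (r+2))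
      (fun i hi => by
        have hir : i ≤ r + 1 := Nat.lt_succ_iff.mp (Finset.mem_range.mp hi)
        calc b ^ i * a ^ (r+2-1-i) ≤ a ^ i * a ^ (r+2-1-i) := by
              apply mul_le_mul_of_nonneg_right (pow_le_pow_left₀ hb hba.le i)
                (pow_nonneg ha.le _)
          _ = a ^ (r+1) := by
              rw [← pow_add]
              congr 1
              omega)
      ⟨1, by simp, by
        have h1 : b ^ 1 * a ^ (r+2-1-1) < a ^ 1 * a ^ (r+2-1-1) := by
          apply mul_lt_mul_of_pos_right (by simpa using hba) (pow_pos ha _)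
        calc b ^ 1 * a ^ (r+2-1-1) < a ^ 1 * a ^ (r+2-1-1) := h1
          _ = a ^ (r+1) := by rw [← pow_add]; congr 1; omega⟩
    calc S < ∑ _i ∈ Finset.range (r+2), a ^ (r+1) := h
      _ = ((r:ℝ)+2) * a^(r+1) := by
          rw [Finset.sum_const, Finset.card_range, nsmul_eq_mul]; push_cast; ring
  have hprod : 0 < (((r:ℝ)+2) * a^(r+1) - S) * (a - b) :=
    mul_pos (by linarith) (by linarith)
  rw [pow_succ a (r+1), pow_succ b (r+1)] at hgs ⊢
  nlinarith [hgs, hprod]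

set_option maxHeartbeats 2000000 in
lemma inv_lemma (r : ℕ) (α : ℝ) (h0 : 0 < α) (h1 : α < 1) (k : ℕ) :
    0 < alphaSeq (r+2) α k ∧ alphaSeq (r+2) α k < 1 ∧
    (∀ t : ℝ, 0 ≤ t → 0 < fSeq (r+2) α k t) ∧
    (∀ x : ℝ, 0 ≤ x → x ≤ α → gSeq (r+2) α k x ≤ alphaSeq (r+2) α k) ∧
    (∀ x : ℝ, 0 < x → x ≤ α →
      ∃ d, HasDerivAt (gSeq (r+2) α k) d x ∧ 0 ≤ x * d ∧ x * d ≤ gSeq (r+2) α k x) := by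
  induction k with
  | zero =>
    have hg0 : gSeq (r+2) α 0 = fun x : ℝ => x := by
      funext y; simp [gSeq, fSeq]
    refine ⟨h0, h1, fun t _ => by simp [fSeq], fun x hx hxα => by simpa [hg0, alphaSeq] using hxα,
      fun x hx hxα => ⟨1, ?_, by simpa using hx.le, by simp [hg0]⟩⟩
    rw [hg0]; exact hasDerivAt_id x
  | succ k IH =>
    obtain ⟨hA0, hA1, hf, hg, hd⟩ := IH
    set A := alphaSeq (r+2) α k with hA
    set m := mu (r+2) A with hm
    obtain ⟨hm0, hAm, hmpA⟩ := mu_bounds r A hA0 hA1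
    rw [← hm] at hm0 hAm hmpA
    clear_value A m
    have hsub : r + 2 - 1 = r + 1 := rfl
    have hcast : ((r+2 : ℕ) : ℝ) = (r:ℝ) + 2 := by push_cast; ring
    -- the Newton map
    set Nf : ℝ → ℝ :=
      fun z => ((r:ℝ)+2) * z * m^(r+1) / (((r:ℝ)+1) * m^(r+2) + z^(r+2)) with hNf
    have hvpos : ∀ z : ℝ, 0 ≤ z → 0 < ((r:ℝ)+1) * m^(r+2) + z^(r+2) := by
      intro z hz; positivity
    -- alphaSeq step as Nf
    have hANf : alphaSeq (r+2) α (k+1) = Nf A := by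
      rw [alphaSeq]
      rw [← hA, ← hm, hNf, hsub, hcast]
      rw [show ((r:ℝ)+2-1) = (r:ℝ)+1 from by ring]
      have hld : (0:ℝ) < ((r:ℝ)+1) * m + A^(r+2) / m^(r+1) :=
        add_pos (mul_pos (by positivity) hm0)
          (div_pos (pow_pos hA0 _) (pow_pos hm0 _))
      rw [div_eq_div_iff hld.ne' (hvpos A hA0.le).ne']
      field_simp
      ring
    -- gSeq step as Nf ∘ gSeq k, for x > 0
    have hNg : ∀ x : ℝ, 0 < x → gSeq (r+2) α (k+1) x = Nf (gSeq (r+2) α k x) := by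
      intro x hx
      have hF : 0 < fSeq (r+2) α k (x ^ (r+2)) := hf _ (by positivity)
      have hgx : gSeq (r+2) α k x = x / fSeq (r+2) α k (x^(r+2)) := rfl
      set F := fSeq (r+2) α k (x ^ (r+2)) with hFdef
      have hden2 : (0:ℝ) <
          ((r:ℝ)+1) * m^(r+2) + (x / F)^(r+2) := hvpos _ (by positivity)
      show x / fSeq (r+2) α (k+1) (x^(r+2)) = _
      rw [fSeq]
      rw [← hA, ← hm, hNf, hsub, hcast, hgx, ← hFdef]
      have hfkpos : (0:ℝ) <
          1 / ((r:ℝ)+2) * (((r:ℝ)+2-1) * m * F + x^(r+2) / (m^(r+1) * F^(r+1))) := by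
        have : ((r:ℝ)+2-1) = (r:ℝ)+1 := by ring
        rw [this]
        positivity
      rw [div_eq_div_iff hfkpos.ne' hden2.ne']
      field_simp
      ring_nf
      rw [show F ^ 2 * F ^ r * x ^ 2 * x ^ r * F⁻¹ ^ 2 * F⁻¹ ^ r = x ^ 2 * x ^ r by
        rw [inv_pow, inv_pow]; field_simp]
    -- positivity of alphaSeq (k+1)
    have hA1pos : 0 < alphaSeq (r+2) α (k+1) := by
      rw [hANf, hNf]
      exact div_pos (by positivity) (hvpos A hA0.le)
    -- alphaSeq (k+1) < 1 via strict AM-GM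
    have hA1lt : alphaSeq (r+2) α (k+1) < 1 := by
      rw [hANf, hNf]
      rw [div_lt_iff₀ (hvpos A hA0.le)]
      have h := amgm r m A hA0.le hAm
      nlinarith [h]
    -- monotonicity key inequality
    have hmono : ∀ y : ℝ, 0 ≤ y → y ≤ A → Nf y ≤ Nf A := by
      intro y hy hyA
      have hgs := geom_sum₂_mul A y (r+1)
      set S : ℝ := ∑ i ∈ Finset.range (r+1), A ^ i * y ^ (r+1-1-i) with hSdef
      have hSnn : 0 ≤ S := by
        rw [hSdef]
        exact Finset.sum_nonneg fun i _ =>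
          mul_nonneg (pow_nonneg hA0.le _) (pow_nonneg hy _)
      have hSle : S ≤ ((r:ℝ)+1) * A^r := by
        calc S ≤ (Finset.range (r+1)).card • (A^r) := by
              apply Finset.sum_le_card_nsmul
              intro i hi
              have hir : i ≤ r := Nat.lt_succ_iff.mp (Finset.mem_range.mp hi)
              calc A ^ i * y ^ (r+1-1-i) ≤ A ^ i * A ^ (r+1-1-i) := by
                    apply mul_le_mul_of_nonneg_left
                      (pow_le_pow_left₀ hy hyA _) (pow_nonneg hA0.le _)
                _ = A ^ r := by rw [← pow_add]; congr 1; omega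
          _ = ((r:ℝ)+1) * A^r := by
              rw [Finset.card_range, nsmul_eq_mul]; push_cast; ring
      have hkey : y * (((r:ℝ)+1) * m^(r+2) + A^(r+2)) ≤
          A * (((r:ℝ)+1) * m^(r+2) + y^(r+2)) := by
        have h2 : y * A * S ≤ ((r:ℝ)+1) * m^(r+2) := by
          calc y * A * S ≤ A * A * (((r:ℝ)+1) * A^r) := by
                have := mul_le_mul_of_nonneg_right (mul_le_mul hyA le_rfl hA0.le hA0.le) hSnn
                nlinarith [mul_le_mul_of_nonneg_left hSle
                  (mul_nonneg hA0.le hA0.le : (0:ℝ) ≤ A * A)]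
            _ = ((r:ℝ)+1) * A^(r+2) := by ring
            _ ≤ ((r:ℝ)+1) * m^(r+2) := by
                apply mul_le_mul_of_nonneg_left
                  (pow_le_pow_left₀ hA0.le hAm.le _) (by positivity)
        have h3 : 0 ≤ (((r:ℝ)+1) * m^(r+2) - y * A * S) * (A - y) :=
          mul_nonneg (by linarith) (by linarith)
        have hgs' : y * A * (S * (A - y)) = y * A * (A^(r+1) - y^(r+1)) := by rw [hgs]
        nlinarith [h3, hgs', pow_succ A (r+1), pow_succ y (r+1)]
      rw [hNf]
      rw [div_le_div_iff₀ (hvpos y hy) (hvpos A hA0.le)]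
      nlinarith [mul_le_mul_of_nonneg_left hkey
        (by positivity : (0:ℝ) ≤ ((r:ℝ)+2) * m^(r+1))]
    -- g bound
    have hgb : ∀ x : ℝ, 0 ≤ x → x ≤ α →
        gSeq (r+2) α (k+1) x ≤ alphaSeq (r+2) α (k+1) := by
      intro x hx hxα
      rcases eq_or_lt_of_le hx with h | h
      · rw [← h]
        have : gSeq (r+2) α (k+1) 0 = 0 := by simp [gSeq]
        rw [this]; exact hA1pos.le
      · rw [hNg x h, hANf]
        exact hmono _ (div_nonneg hx (hf _ (by positivity)).le) (hg x hx hxα)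
    -- f positivity
    have hf' : ∀ t : ℝ, 0 ≤ t → 0 < fSeq (r+2) α (k+1) t := by
      intro t ht
      rw [fSeq, ← hA, ← hm, hsub, hcast]
      have h2 : ((r:ℝ)+2-1) = (r:ℝ)+1 := by ring
      rw [h2]
      have := hf t ht
      positivity
    refine ⟨hA1pos, hA1lt, hf', hgb, ?_⟩
    -- derivative part
    intro x hx hxα
    obtain ⟨d, hdd, hxd0, hxdg⟩ := hd x hx hxα
    have hF : 0 < fSeq (r+2) α k (x ^ (r+2)) := hf _ (by positivity)
    set y := gSeq (r+2) α k x with hy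
    have hy0 : 0 ≤ y := div_nonneg hx.le hF.le
    have hyA : y ≤ A := hg x hx.le hxα
    have hym : y ≤ m := hyA.trans hAm.le
    have hvy : 0 < ((r:ℝ)+1) * m^(r+2) + y^(r+2) := hvpos y hy0
    set V : ℝ := ((r:ℝ)+1) * m^(r+2) + y^(r+2) with hV
    have hu : HasDerivAt (fun z : ℝ => ((r:ℝ)+2) * z * m^(r+1)) (((r:ℝ)+2) * m^(r+1)) y := by
      simpa using ((hasDerivAt_id y).const_mul ((r:ℝ)+2)).mul_const (m^(r+1))
    have hv : HasDerivAt (fun z : ℝ => ((r:ℝ)+1) * m^(r+2) + z^(r+2))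
        (((r:ℝ)+2) * y^(r+1)) y := by
      simpa using (hasDerivAt_pow (r+2) y).const_add (((r:ℝ)+1) * m^(r+2))
    have hN := hu.div hv hvy.ne'
    set DN : ℝ := ((r:ℝ)+2) * (((r:ℝ)+1) * (m^(r+2) - y^(r+2))) * m^(r+1) / V^2 with hDN
    have hval : (((r:ℝ)+2) * m^(r+1) * V - ((r:ℝ)+2) * y * m^(r+1) * (((r:ℝ)+2) * y^(r+1)))
        / V^2 = DN := by
      rw [hDN]
      congr 1
      rw [hV]
      ring
    have hNd : HasDerivAt Nf DN y := by
      rw [hNf]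
      have : HasDerivAt (fun z : ℝ => ((r:ℝ)+2) * z * m^(r+1) /
          (((r:ℝ)+1) * m^(r+2) + z^(r+2)))
          ((((r:ℝ)+2) * m^(r+1) * V - ((r:ℝ)+2) * y * m^(r+1) * (((r:ℝ)+2) * y^(r+1))) / V^2)
          y := hN
      rwa [hval] at this
    have hcomp : HasDerivAt (Nf ∘ gSeq (r+2) α k) (DN * d) x := hNd.comp x hdd
    have hEq : gSeq (r+2) α (k+1) =ᶠ[nhds x] (Nf ∘ gSeq (r+2) α k) := by
      filter_upwards [eventually_gt_nhds hx] with z hz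
      exact hNg z hz
    have hder : HasDerivAt (gSeq (r+2) α (k+1)) (DN * d) x :=
      hcomp.congr_of_eventuallyEq hEq
    have hpowle : y^(r+2) ≤ m^(r+2) := pow_le_pow_left₀ hy0 hym _
    have hsub0 : (0:ℝ) ≤ m^(r+2) - y^(r+2) := by linarith
    have hDN0 : 0 ≤ DN := by
      rw [hDN]
      apply div_nonneg _ (sq_nonneg V)
      exact mul_nonneg (mul_nonneg (by positivity)
        (mul_nonneg (by positivity) hsub0)) (pow_nonneg hm0.le _)
    clear_value y V DN
    refine ⟨DN * d, hder, ?_, ?_⟩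
    · calc (0:ℝ) ≤ DN * (x * d) := mul_nonneg hDN0 hxd0
        _ = x * (DN * d) := by ring
    · rw [hNg x hx, ← hy]
      have h1 : x * (DN * d) ≤ DN * y := by
        calc x * (DN * d) = DN * (x * d) := by ring
          _ ≤ DN * y := mul_le_mul_of_nonneg_left hxdg hDN0
      have hNfy0 : 0 ≤ Nf y := by
        simp only [hNf]
        apply div_nonneg (mul_nonneg (mul_nonneg (by positivity) hy0)
          (pow_nonneg hm0.le _))
        rw [← hV]
        exact hvy.le
      have h2 : DN * y ≤ Nf y := by
        have hrho : (((r:ℝ)+1) * (m^(r+2) - y^(r+2))) / V ≤ 1 := by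
          rw [div_le_one hvy]
          nlinarith [pow_nonneg hy0 (r+2)]
        have heq : DN * y = Nf y * ((((r:ℝ)+1) * (m^(r+2) - y^(r+2))) / V) := by
          simp only [hDN, hNf, hV]
          field_simp
        rw [heq]
        exact mul_le_of_le_one_right hNfy0 hrho
      linarith

/-- **Lemma 2.** For every `α ∈ (0,1)`, every `k ≥ 0` and every `x ∈ [0,α]`,
`0 ≤ x g_k'(x) ≤ g_k(x) ≤ α_k`. -/
theorem gSeq_deriv_bounds (p : ℕ) (hp : 2 ≤ p)
    (α : ℝ) (hα : α ∈ Set.Ioo (0 : ℝ) 1) (k : ℕ) :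
    ∀ x ∈ Set.Icc (0 : ℝ) α,
      0 ≤ x * deriv (gSeq p α k) x ∧
      x * deriv (gSeq p α k) x ≤ gSeq p α k x ∧
      gSeq p α k x ≤ alphaSeq p α k := by
  obtain ⟨hα0, hα1⟩ := hα
  obtain ⟨r, rfl⟩ : ∃ r, p = r + 2 := ⟨p - 2, by omega⟩
  obtain ⟨hA0, hA1, hf, hg, hd⟩ := inv_lemma r α hα0 hα1 k
  intro x hx
  obtain ⟨hx0, hxα⟩ := hx
  rcases eq_or_lt_of_le hx0 with h | h
  · have hg0 : gSeq (r+2) α k 0 = 0 := by simp [gSeq]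
    refine ⟨by rw [← h]; simp, by rw [← h, hg0]; simp, ?_⟩
    rw [← h, hg0]
    exact hA0.le
  · obtain ⟨d, hdd, h1, h2⟩ := hd x h hxα
    rw [hdd.deriv]
    exact ⟨h1, h2, hg x hx0 hxα⟩
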